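/- arXiv:1404.6892 — 4 statements merged into one kernel-verified Lean document; each statement's English description precedes it below -/
import Mathlib

section
/- Let b and c be integers with b ≥ 1 and c ≥ 1. Then the absolute value of the determinant of the 7×7 matrix obtained from G₁(b,c) by deleting the first and second rows and the first and second columns equals (3bc+3b+3c+2)(3bc+5b+5c+4). -/
open Matrix

/-- The 9×9 Goeritz matrix `G₁(b,c)` of the checkerboard-colored diagram of the
link `𝓛` arising from the pretzel knot `P(3, 2b+1, 2c+1)`. -/
def G1 (b c : ℤ) : Matrix (Fin 9) (Fin 9) ℤ :=
  !![-1,  0,  0,  -1,   0,   0,    1,      0,      0;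
      0, -1,  0,   0,  -1,   0,    0,      1,      0;
      0,  0, -1,   0,   0,  -1,    0,      0,      1;
     -1,  0,  0, b+1,   0,   0,    0,     -b,      0;
      0, -1,  0,   0, b+1,   0,    0,      0,     -b;
      0,  0, -1,   0,   0, b+1,   -b,      0,      0;
      1,  0,  0,   0,   0,  -b, b+2*c+1, -(c+1), -(c+1);
      0,  1,  0,  -b,   0,   0, -(c+1), b+2*c+1, -(c+1);
      0,  0,  1,   0,  -b,   0, -(c+1), -(c+1), b+2*c+1]

def reducedG1 {R : Type*} [CommRing R] (b c : R) : Matrix (Fin 7) (Fin 7) R :=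
  !![-1,   0,   0,  -1,       0,       0,       1;
      0, b+1,   0,   0,       0,      -b,       0;
      0,   0, b+1,   0,       0,       0,      -b;
     -1,   0,   0, b+1,      -b,       0,       0;
      0,   0,   0,  -b, b+2*c+1,  -(c+1),  -(c+1);
      0,  -b,   0,   0,  -(c+1), b+2*c+1,  -(c+1);
      1,   0,  -b,   0,  -(c+1),  -(c+1), b+2*c+1]

theorem G1_submatrix_addNat_two (b c : ℤ) :
    (G1 b c).submatrix (Fin.addNat · 2) (Fin.addNat · 2) = reducedG1 b c := by
  ext i j
  fin_cases i <;> fin_cases j <;> rfl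

theorem det_reducedG1 {R : Type*} [CommRing R] (b c : R) :
    (reducedG1 b c).det = (3*b*c + 3*b + 3*c + 2) * (3*b*c + 5*b + 5*c + 4) := by
  simp [reducedG1, det_succ_row_zero, Fin.sum_univ_succ, Fin.succAbove]
  ring

theorem stmt6 (b c : ℤ) (hb : 1 ≤ b) (hc : 1 ≤ c) :
    |((G1 b c).submatrix (fun i : Fin (7) => (⟨i.1 + 2, by have := i.2; omega⟩ : Fin (9)))
        (fun i : Fin (7) => (⟨i.1 + 2, by have := i.2; omega⟩ : Fin (9)))).det| =
      (3*b*c + 3*b + 3*c + 2) * (3*b*c + 5*b + 5*c + 4) := by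
  change |((G1 b c).submatrix (Fin.addNat · 2) (Fin.addNat · 2)).det| = _
  rw [G1_submatrix_addNat_two, det_reducedG1]
  exact abs_of_pos (mul_pos (by nlinarith) (by nlinarith))
end

section
/- Let b and c be integers with b ≥ 1 and c ≥ 1. Then the absolute value of the determinant of the 6×6 matrix obtained from G₁(b,c) by deleting the first three rows and the first three columns equals (3bc+3b+3c+2)². -/
open Matrix

section Aux
variable {α : Type*} (a0 a1 a2 a3 a4 a5 : α)
lemma aux_cs25 : Fin.castSucc (2:Fin 5) = (2:Fin 6) := rfl
lemma aux_cs24 : Fin.castSucc (2:Fin 4) = (2:Fin 5) := rfl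
lemma aux_cs23 : Fin.castSucc (2:Fin 3) = (2:Fin 4) := rfl
lemma aux_s24 : Fin.succ (2:Fin 4) = (3:Fin 5) := rfl
lemma aux_s23 : Fin.succ (2:Fin 3) = (3:Fin 4) := rfl
lemma aux_s25 : Fin.succ (2:Fin 5) = (3:Fin 6) := rfl
lemma aux_cs35 : Fin.castSucc (3:Fin 5) = (3:Fin 6) := rfl
lemma aux_cs34 : Fin.castSucc (3:Fin 4) = (3:Fin 5) := rfl
lemma aux_s34 : Fin.succ (3:Fin 4) = (4:Fin 5) := rfl
lemma aux_s35 : Fin.succ (3:Fin 5) = (4:Fin 6) := rfl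
lemma aux_cs45 : Fin.castSucc (4:Fin 5) = (4:Fin 6) := rfl
lemma aux_s45 : Fin.succ (4:Fin 5) = (5:Fin 6) := rfl
lemma aux_v62 : ![a0,a1,a2,a3,a4,a5] (2:Fin 6) = a2 := rfl
lemma aux_v63 : ![a0,a1,a2,a3,a4,a5] (3:Fin 6) = a3 := rfl
lemma aux_v64 : ![a0,a1,a2,a3,a4,a5] (4:Fin 6) = a4 := rfl
lemma aux_v65 : ![a0,a1,a2,a3,a4,a5] (5:Fin 6) = a5 := rfl
lemma aux_v52 : ![a0,a1,a2,a3,a4] (2:Fin 5) = a2 := rfl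
lemma aux_v53 : ![a0,a1,a2,a3,a4] (3:Fin 5) = a3 := rfl
lemma aux_v54 : ![a0,a1,a2,a3,a4] (4:Fin 5) = a4 := rfl
lemma aux_v42 : ![a0,a1,a2,a3] (2:Fin 4) = a2 := rfl
lemma aux_v43 : ![a0,a1,a2,a3] (3:Fin 4) = a3 := rfl
lemma aux_v32 : ![a0,a1,a2] (2:Fin 3) = a2 := rfl
lemma aux_sa_2_0_0 : Fin.succAbove (0:Fin 3) (0:Fin 2) = (1:Fin 3) := rfl
lemma aux_sa_2_0_1 : Fin.succAbove (0:Fin 3) (1:Fin 2) = (2:Fin 3) := rfl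
lemma aux_sa_2_1_0 : Fin.succAbove (1:Fin 3) (0:Fin 2) = (0:Fin 3) := rfl
lemma aux_sa_2_1_1 : Fin.succAbove (1:Fin 3) (1:Fin 2) = (2:Fin 3) := rfl
lemma aux_sa_2_2_0 : Fin.succAbove (2:Fin 3) (0:Fin 2) = (0:Fin 3) := rfl
lemma aux_sa_2_2_1 : Fin.succAbove (2:Fin 3) (1:Fin 2) = (1:Fin 3) := rfl
lemma aux_sa_3_0_0 : Fin.succAbove (0:Fin 4) (0:Fin 3) = (1:Fin 4) := rfl
lemma aux_sa_3_0_1 : Fin.succAbove (0:Fin 4) (1:Fin 3) = (2:Fin 4) := rfl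
lemma aux_sa_3_0_2 : Fin.succAbove (0:Fin 4) (2:Fin 3) = (3:Fin 4) := rfl
lemma aux_sa_3_1_0 : Fin.succAbove (1:Fin 4) (0:Fin 3) = (0:Fin 4) := rfl
lemma aux_sa_3_1_1 : Fin.succAbove (1:Fin 4) (1:Fin 3) = (2:Fin 4) := rfl
lemma aux_sa_3_1_2 : Fin.succAbove (1:Fin 4) (2:Fin 3) = (3:Fin 4) := rfl
lemma aux_sa_3_2_0 : Fin.succAbove (2:Fin 4) (0:Fin 3) = (0:Fin 4) := rfl
lemma aux_sa_3_2_1 : Fin.succAbove (2:Fin 4) (1:Fin 3) = (1:Fin 4) := rfl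
lemma aux_sa_3_2_2 : Fin.succAbove (2:Fin 4) (2:Fin 3) = (3:Fin 4) := rfl
lemma aux_sa_3_3_0 : Fin.succAbove (3:Fin 4) (0:Fin 3) = (0:Fin 4) := rfl
lemma aux_sa_3_3_1 : Fin.succAbove (3:Fin 4) (1:Fin 3) = (1:Fin 4) := rfl
lemma aux_sa_3_3_2 : Fin.succAbove (3:Fin 4) (2:Fin 3) = (2:Fin 4) := rfl
lemma aux_sa_4_0_0 : Fin.succAbove (0:Fin 5) (0:Fin 4) = (1:Fin 5) := rfl
lemma aux_sa_4_0_1 : Fin.succAbove (0:Fin 5) (1:Fin 4) = (2:Fin 5) := rfl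
lemma aux_sa_4_0_2 : Fin.succAbove (0:Fin 5) (2:Fin 4) = (3:Fin 5) := rfl
lemma aux_sa_4_0_3 : Fin.succAbove (0:Fin 5) (3:Fin 4) = (4:Fin 5) := rfl
lemma aux_sa_4_1_0 : Fin.succAbove (1:Fin 5) (0:Fin 4) = (0:Fin 5) := rfl
lemma aux_sa_4_1_1 : Fin.succAbove (1:Fin 5) (1:Fin 4) = (2:Fin 5) := rfl
lemma aux_sa_4_1_2 : Fin.succAbove (1:Fin 5) (2:Fin 4) = (3:Fin 5) := rfl
lemma aux_sa_4_1_3 : Fin.succAbove (1:Fin 5) (3:Fin 4) = (4:Fin 5) := rfl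
lemma aux_sa_4_2_0 : Fin.succAbove (2:Fin 5) (0:Fin 4) = (0:Fin 5) := rfl
lemma aux_sa_4_2_1 : Fin.succAbove (2:Fin 5) (1:Fin 4) = (1:Fin 5) := rfl
lemma aux_sa_4_2_2 : Fin.succAbove (2:Fin 5) (2:Fin 4) = (3:Fin 5) := rfl
lemma aux_sa_4_2_3 : Fin.succAbove (2:Fin 5) (3:Fin 4) = (4:Fin 5) := rfl
lemma aux_sa_4_3_0 : Fin.succAbove (3:Fin 5) (0:Fin 4) = (0:Fin 5) := rfl
lemma aux_sa_4_3_1 : Fin.succAbove (3:Fin 5) (1:Fin 4) = (1:Fin 5) := rfl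
lemma aux_sa_4_3_2 : Fin.succAbove (3:Fin 5) (2:Fin 4) = (2:Fin 5) := rfl
lemma aux_sa_4_3_3 : Fin.succAbove (3:Fin 5) (3:Fin 4) = (4:Fin 5) := rfl
lemma aux_sa_4_4_0 : Fin.succAbove (4:Fin 5) (0:Fin 4) = (0:Fin 5) := rfl
lemma aux_sa_4_4_1 : Fin.succAbove (4:Fin 5) (1:Fin 4) = (1:Fin 5) := rfl
lemma aux_sa_4_4_2 : Fin.succAbove (4:Fin 5) (2:Fin 4) = (2:Fin 5) := rfl
lemma aux_sa_4_4_3 : Fin.succAbove (4:Fin 5) (3:Fin 4) = (3:Fin 5) := rfl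
lemma aux_sa_5_0_0 : Fin.succAbove (0:Fin 6) (0:Fin 5) = (1:Fin 6) := rfl
lemma aux_sa_5_0_1 : Fin.succAbove (0:Fin 6) (1:Fin 5) = (2:Fin 6) := rfl
lemma aux_sa_5_0_2 : Fin.succAbove (0:Fin 6) (2:Fin 5) = (3:Fin 6) := rfl
lemma aux_sa_5_0_3 : Fin.succAbove (0:Fin 6) (3:Fin 5) = (4:Fin 6) := rfl
lemma aux_sa_5_0_4 : Fin.succAbove (0:Fin 6) (4:Fin 5) = (5:Fin 6) := rfl
lemma aux_sa_5_1_0 : Fin.succAbove (1:Fin 6) (0:Fin 5) = (0:Fin 6) := rfl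
lemma aux_sa_5_1_1 : Fin.succAbove (1:Fin 6) (1:Fin 5) = (2:Fin 6) := rfl
lemma aux_sa_5_1_2 : Fin.succAbove (1:Fin 6) (2:Fin 5) = (3:Fin 6) := rfl
lemma aux_sa_5_1_3 : Fin.succAbove (1:Fin 6) (3:Fin 5) = (4:Fin 6) := rfl
lemma aux_sa_5_1_4 : Fin.succAbove (1:Fin 6) (4:Fin 5) = (5:Fin 6) := rfl
lemma aux_sa_5_2_0 : Fin.succAbove (2:Fin 6) (0:Fin 5) = (0:Fin 6) := rfl
lemma aux_sa_5_2_1 : Fin.succAbove (2:Fin 6) (1:Fin 5) = (1:Fin 6) := rfl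
lemma aux_sa_5_2_2 : Fin.succAbove (2:Fin 6) (2:Fin 5) = (3:Fin 6) := rfl
lemma aux_sa_5_2_3 : Fin.succAbove (2:Fin 6) (3:Fin 5) = (4:Fin 6) := rfl
lemma aux_sa_5_2_4 : Fin.succAbove (2:Fin 6) (4:Fin 5) = (5:Fin 6) := rfl
lemma aux_sa_5_3_0 : Fin.succAbove (3:Fin 6) (0:Fin 5) = (0:Fin 6) := rfl
lemma aux_sa_5_3_1 : Fin.succAbove (3:Fin 6) (1:Fin 5) = (1:Fin 6) := rfl
lemma aux_sa_5_3_2 : Fin.succAbove (3:Fin 6) (2:Fin 5) = (2:Fin 6) := rfl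
lemma aux_sa_5_3_3 : Fin.succAbove (3:Fin 6) (3:Fin 5) = (4:Fin 6) := rfl
lemma aux_sa_5_3_4 : Fin.succAbove (3:Fin 6) (4:Fin 5) = (5:Fin 6) := rfl
lemma aux_sa_5_4_0 : Fin.succAbove (4:Fin 6) (0:Fin 5) = (0:Fin 6) := rfl
lemma aux_sa_5_4_1 : Fin.succAbove (4:Fin 6) (1:Fin 5) = (1:Fin 6) := rfl
lemma aux_sa_5_4_2 : Fin.succAbove (4:Fin 6) (2:Fin 5) = (2:Fin 6) := rfl
lemma aux_sa_5_4_3 : Fin.succAbove (4:Fin 6) (3:Fin 5) = (3:Fin 6) := rfl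
lemma aux_sa_5_4_4 : Fin.succAbove (4:Fin 6) (4:Fin 5) = (5:Fin 6) := rfl
lemma aux_sa_5_5_0 : Fin.succAbove (5:Fin 6) (0:Fin 5) = (0:Fin 6) := rfl
lemma aux_sa_5_5_1 : Fin.succAbove (5:Fin 6) (1:Fin 5) = (1:Fin 6) := rfl
lemma aux_sa_5_5_2 : Fin.succAbove (5:Fin 6) (2:Fin 5) = (2:Fin 6) := rfl
lemma aux_sa_5_5_3 : Fin.succAbove (5:Fin 6) (3:Fin 5) = (3:Fin 6) := rfl
lemma aux_sa_5_5_4 : Fin.succAbove (5:Fin 6) (4:Fin 5) = (4:Fin 6) := rfl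
lemma aux_vc_1_1 (x:α)(f:Fin 1 → α) : Matrix.vecCons x f (1:Fin 2) = f 0 := rfl
lemma aux_vc_2_1 (x:α)(f:Fin 2 → α) : Matrix.vecCons x f (1:Fin 3) = f 0 := rfl
lemma aux_vc_2_2 (x:α)(f:Fin 2 → α) : Matrix.vecCons x f (2:Fin 3) = f 1 := rfl
lemma aux_vc_3_1 (x:α)(f:Fin 3 → α) : Matrix.vecCons x f (1:Fin 4) = f 0 := rfl
lemma aux_vc_3_2 (x:α)(f:Fin 3 → α) : Matrix.vecCons x f (2:Fin 4) = f 1 := rfl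
lemma aux_vc_3_3 (x:α)(f:Fin 3 → α) : Matrix.vecCons x f (3:Fin 4) = f 2 := rfl
lemma aux_vc_4_1 (x:α)(f:Fin 4 → α) : Matrix.vecCons x f (1:Fin 5) = f 0 := rfl
lemma aux_vc_4_2 (x:α)(f:Fin 4 → α) : Matrix.vecCons x f (2:Fin 5) = f 1 := rfl
lemma aux_vc_4_3 (x:α)(f:Fin 4 → α) : Matrix.vecCons x f (3:Fin 5) = f 2 := rfl
lemma aux_vc_4_4 (x:α)(f:Fin 4 → α) : Matrix.vecCons x f (4:Fin 5) = f 3 := rfl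
lemma aux_vc_5_1 (x:α)(f:Fin 5 → α) : Matrix.vecCons x f (1:Fin 6) = f 0 := rfl
lemma aux_vc_5_2 (x:α)(f:Fin 5 → α) : Matrix.vecCons x f (2:Fin 6) = f 1 := rfl
lemma aux_vc_5_3 (x:α)(f:Fin 5 → α) : Matrix.vecCons x f (3:Fin 6) = f 2 := rfl
lemma aux_vc_5_4 (x:α)(f:Fin 5 → α) : Matrix.vecCons x f (4:Fin 6) = f 3 := rfl
lemma aux_vc_5_5 (x:α)(f:Fin 5 → α) : Matrix.vecCons x f (5:Fin 6) = f 4 := rfl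
end Aux

set_option maxHeartbeats 6000000 in
set_option maxRecDepth 4000 in
theorem stmt9 (b c : ℤ) (hb : 1 ≤ b) (hc : 1 ≤ c) :
    |((G1 b c).submatrix (fun i : Fin (6) => (⟨i.1 + 3, by have := i.2; omega⟩ : Fin (9)))
        (fun i : Fin (6) => (⟨i.1 + 3, by have := i.2; omega⟩ : Fin (9)))).det| =
      (3*b*c + 3*b + 3*c + 2)^2 := by
  have hM : ((G1 b c).submatrix (fun i : Fin (6) => (⟨i.1 + 3, by have := i.2; omega⟩ : Fin (9)))
        (fun i : Fin (6) => (⟨i.1 + 3, by have := i.2; omega⟩ : Fin (9)))) =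
      !![b+1,0,0,0,-b,0; 0,b+1,0,0,0,-b; 0,0,b+1,-b,0,0;
         0,0,-b,b+2*c+1,-(c+1),-(c+1); -b,0,0,-(c+1),b+2*c+1,-(c+1);
         0,-b,0,-(c+1),-(c+1),b+2*c+1] := by
    ext i j
    fin_cases i <;> fin_cases j <;> rfl
  rw [hM]
  have h : (!![b+1,0,0,0,-b,0; 0,b+1,0,0,0,-b; 0,0,b+1,-b,0,0;
         0,0,-b,b+2*c+1,-(c+1),-(c+1); -b,0,0,-(c+1),b+2*c+1,-(c+1);
         0,-b,0,-(c+1),-(c+1),b+2*c+1] : Matrix (Fin 6) (Fin 6) ℤ).det =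
      -((3*b*c + 3*b + 3*c + 2)^2) := by
    simp (config := { maxSteps := 10000000 }) [Matrix.det_succ_row_zero, Fin.sum_univ_succ, aux_cs25, aux_cs24, aux_cs23,
      aux_s24, aux_s23, aux_s25, aux_cs35, aux_cs34, aux_s34, aux_s35, aux_cs45, aux_s45,
      aux_v62, aux_v63, aux_v64, aux_v65, aux_v52, aux_v53, aux_v54, aux_v42, aux_v43, aux_v32,
      aux_sa_2_0_0, aux_sa_2_0_1, aux_sa_2_1_0, aux_sa_2_1_1, aux_sa_2_2_0, aux_sa_2_2_1, aux_sa_3_0_0, aux_sa_3_0_1, aux_sa_3_0_2, aux_sa_3_1_0, aux_sa_3_1_1, aux_sa_3_1_2, aux_sa_3_2_0, aux_sa_3_2_1, aux_sa_3_2_2, aux_sa_3_3_0, aux_sa_3_3_1, aux_sa_3_3_2, aux_sa_4_0_0, aux_sa_4_0_1, aux_sa_4_0_2, aux_sa_4_0_3, aux_sa_4_1_0, aux_sa_4_1_1, aux_sa_4_1_2, aux_sa_4_1_3, aux_sa_4_2_0, aux_sa_4_2_1, aux_sa_4_2_2, aux_sa_4_2_3, aux_sa_4_3_0, aux_sa_4_3_1,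 aux_sa_4_3_2, aux_sa_4_3_3, aux_sa_4_4_0, aux_sa_4_4_1, aux_sa_4_4_2, aux_sa_4_4_3, aux_sa_5_0_0, aux_sa_5_0_1, aux_sa_5_0_2, aux_sa_5_0_3, aux_sa_5_0_4, aux_sa_5_1_0, aux_sa_5_1_1, aux_sa_5_1_2, aux_sa_5_1_3, aux_sa_5_1_4, aux_sa_5_2_0, aux_sa_5_2_1, aux_sa_5_2_2, aux_sa_5_2_3, aux_sa_5_2_4, aux_sa_5_3_0, aux_sa_5_3_1, aux_sa_5_3_2, aux_sa_5_3_3, aux_sa_5_3_4, aux_sa_5_4_0, aux_sa_5_4_1, aux_sa_5_4_2, aux_sa_5_4_3, aux_sa_5_4_4, aux_sa_5_5_0, aux_sa_5_5_1, aux_sa_5_5_2, aux_sa_5_5_3, aux_sa_5_5_4,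
      aux_vc_1_1, aux_vc_2_1, aux_vc_2_2, aux_vc_3_1, aux_vc_3_2, aux_vc_3_3, aux_vc_4_1, aux_vc_4_2, aux_vc_4_3, aux_vc_4_4, aux_vc_5_1, aux_vc_5_2, aux_vc_5_3, aux_vc_5_4, aux_vc_5_5]
    ring
  rw [h, abs_neg, abs_of_nonneg (by positivity)]
end

section
/- Let a, b, c be integers with a ≥ 1, b ≥ 1 and c ≥ 1. Then the determinant of the (3a+6)×(3a+6) integer matrix M(a,b,c) equals (−1)^(a−1) · (3ab+3bc+3ca+3a+3b+3c+2)². -/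
/-!
Let `shiftedM a s` be `M(a,b,c)` over `ℚ` with `s` added to its first three diagonal entries.
For `a ≥ 2` the first block row of `M` is `(-2·I, I, 0, …)`, so the Schur complement of the scalar
block `(s - 2)·I` gives `det (shiftedM (a+1) s) = (s - 2)³ · det (shiftedM a (-1/(s - 2)))`.
The map `s ↦ -1/(s - 2)` sends `k/(k+1)` to `(k+1)/(k+2)`, so starting from `s = 0` everything
reduces to `shiftedM 1 ((a-1)/a)`, a shift of `G₁(b,c)`. There the leading block is scalar again,
and after its Schur complement so is the next one; for square blocks with a scalar corner
`det [[x·I, B], [C, D]] = det (x·D - C·B)` holds without inverting `x`. What remains is a `3 × 3`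
matrix `x·I + y·(J - I)` with `x - y = 3(ab+bc+ca) + 3(a+b+c) + 2` and `x + 2y = -1`.
-/

open Matrix

/-- The `(3a+6) × (3a+6)` Goeritz matrix `M(a,b,c)` of the checkerboard-colored diagram
of the link `𝓛` whose double branched cover is the 3-fold cyclic branched cover of the
pretzel knot `P(2a+1, 2b+1, 2c+1)` (indices here are 0-based): entries with both indices
`≥ 3(a-1)` form a copy of `G₁(b,c)`; the remaining diagonal entries are `-2`; the
remaining entries at distance `3` from the diagonal are `1`; all other entries vanish.
In particular `M 1 b c = G1 b c`. -/
def M (a : ℕ) (b c : ℤ) : Matrix (Fin (3*a+6)) (Fin (3*a+6)) ℤ :=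
  Matrix.of fun i j =>
    if h : 3*(a-1) ≤ i.1 ∧ 3*(a-1) ≤ j.1 then
      G1 b c ⟨i.1 - 3*(a-1), by have := i.2; omega⟩ ⟨j.1 - 3*(a-1), by have := j.2; omega⟩
    else if i.1 = j.1 then -2
    else if i.1 + 3 = j.1 ∨ j.1 + 3 = i.1 then 1
    else 0

section BlockDeterminants

variable {R K : Type*} [CommRing R] [Field K] {m n : Type*} [Fintype m] [Fintype n]
  [DecidableEq m] [DecidableEq n]

theorem Matrix.pow_card_mul_det_fromBlocks_smul_one (x : R) (B C D : Matrix n n R) :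
    x ^ Fintype.card n * (fromBlocks (x • 1) B C D).det
      = x ^ Fintype.card n * (x • D - C * B).det := by
  have h : fromBlocks 1 0 (-C) (x • 1) * fromBlocks (x • 1) B C D
      = fromBlocks (x • 1) B 0 (x • D - C * B) := by
    simp [fromBlocks_multiply, sub_eq_neg_add]
  have := congrArg det h
  rw [det_mul, det_fromBlocks_zero₁₂, det_fromBlocks_zero₂₁, det_one, det_smul, det_one,
    one_mul, mul_one] at this
  rw [← this, mul_comm]

/-- `x ^ card n` need not be cancellable in `R`, so the previous identity is used for `X` over
`R[X]`, where `X` is a non-zero-divisor, and then evaluated at `x`. -/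
theorem Matrix.det_fromBlocks_smul_one (x : R) (B C D : Matrix n n R) :
    (fromBlocks (x • 1) B C D).det = (x • D - C * B).det := by
  have hX := (Polynomial.isRegular_X_pow (R := R) (Fintype.card n)).left <|
    pow_card_mul_det_fromBlocks_smul_one Polynomial.X
      (B.map Polynomial.C) (C.map Polynomial.C) (D.map Polynomial.C)
  have := congrArg (Polynomial.evalRingHom x) hX
  rw [RingHom.map_det, RingHom.map_det] at this
  convert this using 2
  · simp only [RingHom.mapMatrix_apply, fromBlocks_map, fromBlocks_inj]
    refine ⟨?_, ?_, ?_, ?_⟩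
    · ext i j
      by_cases h : i = j <;> simp [h]
    all_goals ext; simp
  · ext
    simp [mul_apply, Polynomial.eval_finsetSum, mul_comm x]

theorem Matrix.det_fromBlocks_smul_one_of_ne_zero {x : K} (hx : x ≠ 0) (B : Matrix m n K)
    (C : Matrix n m K) (D : Matrix n n K) :
    (fromBlocks (x • 1) B C D).det = x ^ Fintype.card m * (D - x⁻¹ • (C * B)).det := by
  let : Invertible (x • 1 : Matrix m m K) :=
    ⟨x⁻¹ • 1, by simp [smul_smul, hx], by simp [smul_smul, hx]⟩
  have hinv : ⅟(x • 1 : Matrix m m K) = x⁻¹ • 1 := rfl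
  rw [det_fromBlocks₁₁, hinv, det_smul, det_one, mul_one, Matrix.mul_smul, Matrix.mul_one,
    Matrix.smul_mul]

end BlockDeterminants

namespace PretzelGoeritz

def headRows (R : Type*) [Zero R] [One R] (n : ℕ) : Matrix (Fin 3) (Fin n) R :=
  of fun i j => if (i : ℕ) = j then 1 else 0

def headProj (n : ℕ) : Matrix (Fin n) (Fin n) ℚ :=
  diagonal fun i => if (i : ℕ) < 3 then 1 else 0

def shiftedM (a : ℕ) (b c : ℤ) (s : ℚ) : Matrix (Fin (3*a+6)) (Fin (3*a+6)) ℚ :=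
  (M a b c).map (↑) + s • headProj (3*a+6)

lemma headRows_transpose_mul_headRows (n : ℕ) :
    (headRows ℚ n)ᵀ * headRows ℚ n = headProj n := by
  ext i j
  simp only [headRows, headProj, mul_apply, transpose_apply, of_apply, diagonal_apply,
    Fin.sum_univ_three, Fin.val_zero, Fin.val_one, Fin.val_two]
  split_ifs <;> first | omega | simp_all [Fin.ext_iff]

def splitHead (a : ℕ) : Fin 3 ⊕ Fin (3*a+6) ≃ Fin (3*(a+1)+6) :=
  finSumFinEquiv.trans (finCongr (by ring))

@[simp] lemma val_splitHead_inl (a : ℕ) (i : Fin 3) : (splitHead a (.inl i) : ℕ) = i := rfl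

@[simp] lemma val_splitHead_inr (a : ℕ) (i : Fin (3*a+6)) :
    (splitHead a (.inr i) : ℕ) = 3 + i := rfl

lemma M_succ_submatrix_splitHead (a : ℕ) (ha : 1 ≤ a) (b c : ℤ) :
    (M (a+1) b c).submatrix (splitHead a) (splitHead a)
      = fromBlocks (-2 • 1) (headRows ℤ _) (headRows ℤ _)ᵀ (M a b c) := by
  ext (i | i) (j | j) <;>
    simp only [M, submatrix_apply, fromBlocks_apply₁₁, fromBlocks_apply₁₂, fromBlocks_apply₂₁,
      fromBlocks_apply₂₂, of_apply, headRows, transpose_apply, Matrix.smul_apply, one_apply]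
  case inr.inr =>
    by_cases h : 3 * (a - 1) ≤ (i : ℕ) ∧ 3 * (a - 1) ≤ (j : ℕ)
    · rw [dif_pos (by simp only [val_splitHead_inr]; omega), dif_pos h]
      congr 1 <;> ext <;> simp only [val_splitHead_inr] <;> omega
    · rw [dif_neg (by simp only [val_splitHead_inr]; omega), dif_neg h]
      simp only [val_splitHead_inr]
      split_ifs <;> omega
  all_goals
    rw [dif_neg (by simp only [val_splitHead_inl, val_splitHead_inr]; omega)]
    simp only [val_splitHead_inl, val_splitHead_inr, Fin.ext_iff]
    split_ifs <;> simp_all <;> omega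

lemma headProj_submatrix_splitHead (a : ℕ) :
    (headProj (3*(a+1)+6)).submatrix (splitHead a) (splitHead a) = fromBlocks 1 0 0 0 := by
  ext (i | i) (j | j) <;> simp [headProj, diagonal_apply, one_apply, Fin.ext_iff]

lemma shiftedM_succ_submatrix_splitHead (a : ℕ) (ha : 1 ≤ a) (b c : ℤ) (s : ℚ) :
    (shiftedM (a+1) b c s).submatrix (splitHead a) (splitHead a)
      = fromBlocks ((s - 2) • 1) (headRows ℚ _) (headRows ℚ _)ᵀ (shiftedM a b c 0) := by
  rw [show (shiftedM (a+1) b c s).submatrix (splitHead a) (splitHead a)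
      = ((M (a+1) b c).submatrix (splitHead a) (splitHead a)).map (↑)
        + s • (headProj _).submatrix (splitHead a) (splitHead a) from rfl,
    M_succ_submatrix_splitHead a ha,
    headProj_submatrix_splitHead, fromBlocks_map, fromBlocks_smul, fromBlocks_add]
  congr 1
  · ext i j
    by_cases h : i = j <;> simp [one_apply, ofNat_apply, h]
    ring
  all_goals ext; simp [shiftedM, headRows, apply_ite]

lemma det_shiftedM_succ (a : ℕ) (ha : 1 ≤ a) (b c : ℤ) {s : ℚ} (hs : s ≠ 2) :
    (shiftedM (a+1) b c s).det = (s - 2) ^ 3 * (shiftedM a b c (-(s - 2)⁻¹)).det := by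
  rw [← det_submatrix_equiv_self (splitHead a), shiftedM_succ_submatrix_splitHead a ha,
    det_fromBlocks_smul_one_of_ne_zero (sub_ne_zero.2 hs), headRows_transpose_mul_headRows,
    Fintype.card_fin]
  simp [shiftedM, sub_eq_add_neg]

def borderRow (R : Type*) [Ring R] : Matrix (Fin 3) (Fin 6) R :=
  !![-1, 0, 0, 1, 0, 0;
      0, -1, 0, 0, 1, 0;
      0, 0, -1, 0, 0, 1]

def G1Tail {R : Type*} [Ring R] (b c : R) : Matrix (Fin 6) (Fin 6) R :=
  !![b+1,   0,   0,       0,      -b,       0;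
       0, b+1,   0,       0,       0,      -b;
       0,   0, b+1,      -b,       0,       0;
       0,   0,  -b, b+2*c+1,  -(c+1),  -(c+1);
      -b,   0,   0,  -(c+1), b+2*c+1,  -(c+1);
       0,  -b,   0,  -(c+1),  -(c+1), b+2*c+1]

def G1Core (b c : ℚ) : Matrix (Fin 3) (Fin 3) ℚ :=
  !![b+2*c+1, -(c+1), -(c+1);
     -(c+1), b+2*c+1, -(c+1);
     -(c+1), -(c+1), b+2*c+1]

def twist (b t : ℚ) : Matrix (Fin 3) (Fin 3) ℚ :=
  !![t, -b, 0;
     0, t, -b;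
     -b, 0, t]

lemma G1_submatrix_splitHead (b c : ℤ) :
    (G1 b c).submatrix (splitHead 0) (splitHead 0)
      = fromBlocks (-1) (borderRow ℤ) (borderRow ℤ)ᵀ (G1Tail b c) := by
  ext (i | i) (j | j) <;> fin_cases i <;> fin_cases j <;> rfl

lemma M_one (b c : ℤ) : M 1 b c = G1 b c := by
  ext i j
  simp only [M, of_apply, Nat.sub_self, mul_zero, zero_le, and_self, dite_true, Nat.sub_zero]

lemma shiftedM_one_submatrix_splitHead (b c : ℤ) (s : ℚ) :
    (shiftedM 1 b c s).submatrix (splitHead 0) (splitHead 0)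
      = fromBlocks ((s - 1) • 1) (borderRow ℚ) (borderRow ℚ)ᵀ (G1Tail (b : ℚ) c) := by
  rw [show (shiftedM 1 b c s).submatrix (splitHead 0) (splitHead 0)
      = ((G1 b c).submatrix (splitHead 0) (splitHead 0)).map (↑)
        + s • (headProj _).submatrix (splitHead 0) (splitHead 0) by rw [← M_one]; rfl,
    G1_submatrix_splitHead, headProj_submatrix_splitHead, fromBlocks_map, fromBlocks_smul,
    fromBlocks_add]
  congr 1
  · ext i j
    by_cases h : i = j <;> simp [one_apply, h]
    ring
  all_goals ext i j; fin_cases i <;> fin_cases j <;> simp [borderRow, G1Tail]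

lemma G1Tail_schur_submatrix (b c t : ℚ) :
    (G1Tail b c - t • ((borderRow ℚ)ᵀ * borderRow ℚ)).submatrix finSumFinEquiv finSumFinEquiv
      = fromBlocks ((b + 1 - t) • 1) (twist b t) (twist b t)ᵀ (G1Core b c - t • 1) := by
  ext (i | i) (j | j) <;>
    simp only [submatrix_apply, finSumFinEquiv_apply_left, finSumFinEquiv_apply_right] <;>
    fin_cases i <;> fin_cases j <;>
    simp [Fin.natAdd, Fin.castAdd, Fin.castLE, G1Tail, borderRow, twist, G1Core, mul_apply,
      Fin.sum_univ_three, one_apply]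

lemma G1Core_schur (b c t : ℚ) :
    (b + 1 - t) • (G1Core b c - t • 1) - (twist b t)ᵀ * twist b t
      = !![(b+1-t)*(b+2*c+1-t) - (t^2+b^2), -(b+1-t)*(c+1) + t*b, -(b+1-t)*(c+1) + t*b;
           -(b+1-t)*(c+1) + t*b, (b+1-t)*(b+2*c+1-t) - (t^2+b^2), -(b+1-t)*(c+1) + t*b;
           -(b+1-t)*(c+1) + t*b, -(b+1-t)*(c+1) + t*b, (b+1-t)*(b+2*c+1-t) - (t^2+b^2)] := by
  ext i j
  fin_cases i <;> fin_cases j <;>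
    simp [twist, G1Core, mul_apply, Fin.sum_univ_three, one_apply] <;> ring

lemma det_fin_three_of_diag_offDiag {R : Type*} [CommRing R] (x y : R) :
    det !![x, y, y; y, x, y; y, y, x] = (x - y) ^ 2 * (x + 2 * y) := by
  simp [det_fin_three]
  ring

def detRoot (n b c : ℚ) : ℚ := 3*n*b + 3*b*c + 3*c*n + 3*n + 3*b + 3*c + 2

lemma det_shiftedM_one (b c : ℤ) (k : ℕ) :
    (shiftedM 1 b c (k / (k + 1))).det = detRoot (1 + k) b c ^ 2 / (k + 1) ^ 3 := by
  have hk : (k + 1 : ℚ) ≠ 0 := by positivity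
  have hs : (k / (k + 1) : ℚ) - 1 = -(k + 1 : ℚ)⁻¹ := by
    field_simp
    ring
  rw [← det_submatrix_equiv_self (splitHead 0), shiftedM_one_submatrix_splitHead,
    det_fromBlocks_smul_one_of_ne_zero (by simp [hs, hk]),
    ← det_submatrix_equiv_self (finSumFinEquiv : Fin 3 ⊕ Fin 3 ≃ Fin 6),
    G1Tail_schur_submatrix, det_fromBlocks_smul_one, G1Core_schur, det_fin_three_of_diag_offDiag,
    hs, Fintype.card_fin, inv_neg, inv_inv, detRoot]
  field_simp
  ring

lemma det_shiftedM (a : ℕ) (ha : 1 ≤ a) (b c : ℤ) (k : ℕ) :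
    (shiftedM a b c (k / (k + 1))).det
      = (-1) ^ (a - 1) * detRoot (a + k) b c ^ 2 / (k + 1) ^ 3 := by
  induction a, ha using Nat.le_induction generalizing k with
  | base => simpa using det_shiftedM_one b c k
  | succ a ha ih =>
    have hk : (k + 1 : ℚ) ≠ 0 := by positivity
    have hs : (k / (k + 1) : ℚ) - 2 = -((k + 2) / (k + 1)) := by
      field_simp
      ring
    have hs' : -((k / (k + 1) : ℚ) - 2)⁻¹ = ((k + 1 : ℕ) : ℚ) / ((k + 1 : ℕ) + 1) := by
      rw [hs]
      push_cast
      field_simp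
      ring
    have hs2 : (k / (k + 1) : ℚ) - 2 ≠ 0 := by
      rw [hs]
      have : (0 : ℚ) < (k + 2) / (k + 1) := by positivity
      linarith
    rw [det_shiftedM_succ a ha b c (sub_ne_zero.1 hs2), hs', ih, hs,
      show a + 1 - 1 = a - 1 + 1 by omega, pow_succ,
      show ((a + 1 : ℕ) : ℚ) + k = a + (k + 1 : ℕ) by push_cast; ring]
    push_cast
    field_simp
    ring

end PretzelGoeritz

theorem stmt10_general (a : ℕ) (ha : 1 ≤ a) (b c : ℤ) :
    (M a b c).det = (-1)^(a-1) * (3*(a:ℤ)*b + 3*b*c + 3*c*(a:ℤ) + 3*(a:ℤ) + 3*b + 3*c + 2)^2 := by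
  have h := PretzelGoeritz.det_shiftedM a ha b c 0
  have hcast : ((M a b c).det : ℚ) = (PretzelGoeritz.shiftedM a b c 0).det := by
    rw [show PretzelGoeritz.shiftedM a b c 0 = (M a b c).map (↑) by
      simp [PretzelGoeritz.shiftedM]]
    exact RingHom.map_det (Int.castRingHom ℚ) (M a b c)
  simp only [PretzelGoeritz.detRoot, CharP.cast_eq_zero, add_zero, zero_add, one_pow,
    div_one] at h
  exact_mod_cast hcast.trans h

theorem stmt10 (a : ℕ) (ha : 1 ≤ a) (b c : ℤ) (hb : 1 ≤ b) (hc : 1 ≤ c) :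
    (M a b c).det = (-1)^(a-1) * (3*(a:ℤ)*b + 3*b*c + 3*c*(a:ℤ) + 3*(a:ℤ) + 3*b + 3*c + 2)^2 :=
  stmt10_general a ha b c
end

section
/- Let a, b, c be integers with a ≥ 1, b ≥ 1 and c ≥ 1. Let G₁′(a,b,c) be the 9×9 rational matrix obtained from G₁(b,c) by replacing its upper-left 3×3 block −I with −(1/a)·I (i.e., replacing the (i,i) entries for i = 1,2,3 by −1/a, all other entries unchanged). Then a³ · det G₁′(a,b,c) = (3ab+3bc+3ca+3a+3b+3c+2)² in ℚ. -/
open Matrix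

/-- The matrix `G₁′(a,b,c)`: `G₁(b,c)` with the upper-left `3×3` block `-I`
replaced by `-(1/a)·I`, viewed over `ℚ`. -/
def G1' (a b c : ℤ) : Matrix (Fin 9) (Fin 9) ℚ :=
  Matrix.of fun i j =>
    if i = j ∧ i.1 < 3 then -(1/(a : ℚ)) else ((G1 b c i j : ℤ) : ℚ)

/-!
All 3×3 blocks of `G₁′` are polynomials in the cyclic shift `P`, and `PᵀP = 1`. Taking the Schur
complement of the block `-(1/a)•1`, and then of the block `(a+b+1)•1` of the resulting 6×6 matrix,
leaves the 3×3 matrix `x•1 + y•(P + Pᵀ)` with `s := a+b+1`, `x + 2y = -1/s` and `x - y = N/s`,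
where `N = 3ab+3bc+3ca+3a+3b+3c+2`. Its eigenvalues are `x + 2y` and `x - y` (twice), so
`det G₁′ = (-1/a)³ · s³ · (-N²/s³) = N²/a³`.
-/

namespace Matrix

variable {m n K : Type*} [Fintype m] [DecidableEq m] [Fintype n] [DecidableEq n] [Field K]

theorem det_fromBlocks_smul_one₁₁ {r : K} (hr : r ≠ 0) (B : Matrix m n K) (C : Matrix n m K)
    (D : Matrix n n K) :
    (fromBlocks (r • 1) B C D).det = r ^ Fintype.card m * (D - r⁻¹ • (C * B)).det := by
  let _ : Invertible (r • 1 : Matrix m m K) := ⟨r⁻¹ • 1, by simp [hr], by simp [hr]⟩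
  have hinv : ⅟(r • 1 : Matrix m m K) = r⁻¹ • 1 := rfl
  rw [det_fromBlocks₁₁, det_smul, det_one, mul_one, hinv, Matrix.mul_smul, Matrix.mul_one,
    Matrix.smul_mul]

end Matrix

abbrev cyclicShift (R : Type*) [Zero R] [One R] : Matrix (Fin 3) (Fin 3) R :=
  (finRotate 3).permMatrix R

theorem transpose_cyclicShift_mul_self (R : Type*) [NonAssocSemiring R] :
    (cyclicShift R)ᵀ * cyclicShift R = 1 := by
  rw [transpose_permMatrix, ← permMatrix_mul, mul_inv_cancel, permMatrix_one]

theorem det_smul_one_add_smul_cyclicShift_add_transpose {R : Type*} [CommRing R] (x y : R) :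
    (x • 1 + y • (cyclicShift R + (cyclicShift R)ᵀ)).det = (x + 2 * y) * (x - y) ^ 2 := by
  rw [det_fin_three]
  simp +decide
  ring

theorem smul_one_add_smul_transpose_cyclicShift_mul {R : Type*} [CommRing R] (a b : R) :
    (a • 1 + b • (cyclicShift R)ᵀ) * (a • 1 + b • cyclicShift R) =
      (a ^ 2 + b ^ 2) • 1 + (a * b) • (cyclicShift R + (cyclicShift R)ᵀ) := by
  simp only [add_mul, mul_add, Matrix.smul_mul, Matrix.mul_smul, Matrix.one_mul, Matrix.mul_one,
    transpose_cyclicShift_mul_self]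
  module

section SchurComplements

variable {K : Type*} [Field K]

theorem schurComplement_of_first_block (a b c : K) :
    fromBlocks ((b + 1) • 1) (-(b • cyclicShift K)) (-(b • (cyclicShift K)ᵀ))
        ((b + 2 * c + 1) • 1 - (c + 1) • (cyclicShift K + (cyclicShift K)ᵀ)) -
      (-(1 / a))⁻¹ •
        (fromRows (-1 : Matrix (Fin 3) (Fin 3) K) 1 * fromCols (-1 : Matrix (Fin 3) (Fin 3) K) 1) =
    fromBlocks ((a + b + 1) • 1) (-(a • 1 + b • cyclicShift K)) (-(a • 1 + b • (cyclicShift K)ᵀ))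
        ((a + b + 2 * c + 1) • 1 - (c + 1) • (cyclicShift K + (cyclicShift K)ᵀ)) := by
  rw [fromRows_mul_fromCols, fromBlocks_smul, sub_eq_add_neg, fromBlocks_neg, fromBlocks_add]
  congr 1 <;> simp <;> module

theorem schurComplement_of_second_block (a b c : K) :
    ((a + b + 2 * c + 1) • 1 - (c + 1) • (cyclicShift K + (cyclicShift K)ᵀ)) -
      (a + b + 1)⁻¹ • (-(a • 1 + b • (cyclicShift K)ᵀ) * -(a • 1 + b • cyclicShift K)) =
    (a + b + 2 * c + 1 - (a ^ 2 + b ^ 2) / (a + b + 1)) • 1 +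
      (-(c + 1) - a * b / (a + b + 1)) • (cyclicShift K + (cyclicShift K)ᵀ) := by
  rw [neg_mul_neg, smul_one_add_smul_transpose_cyclicShift_mul]
  module

end SchurComplements

def blockEquiv : Fin 3 ⊕ (Fin 3 ⊕ Fin 3) ≃ Fin 9 :=
  (Equiv.sumCongr (.refl _) finSumFinEquiv).trans finSumFinEquiv

theorem G1'_submatrix_blockEquiv (a b c : ℤ) :
    (G1' a b c).submatrix blockEquiv blockEquiv =
      fromBlocks (-(1 / a : ℚ) • 1) (fromCols (-1) 1) (fromRows (-1) 1)
        (fromBlocks ((b + 1 : ℚ) • 1) (-((b : ℚ) • cyclicShift ℚ))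
          (-((b : ℚ) • (cyclicShift ℚ)ᵀ))
          ((b + 2 * c + 1 : ℚ) • 1 - (c + 1 : ℚ) • (cyclicShift ℚ + (cyclicShift ℚ)ᵀ))) := by
  ext (i | i | i) (j | j | j) <;> fin_cases i <;> fin_cases j <;>
    simp +decide [G1', G1, blockEquiv, finSumFinEquiv, Fin.castAdd, Fin.castLE, Fin.natAdd]

theorem stmt19_general (a b c : ℤ) (ha : 1 ≤ a) (hb : 1 ≤ b) :
    (a : ℚ)^3 * (G1' a b c).det =
      ((3*(a:ℚ)*b + 3*(b:ℚ)*c + 3*(c:ℚ)*a + 3*(a:ℚ) + 3*(b:ℚ) + 3*(c:ℚ) + 2))^2 := by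
  have ha₀ : (a : ℚ) ≠ 0 := by positivity
  have hs : (a + b + 1 : ℚ) ≠ 0 := by positivity
  rw [← det_submatrix_equiv_self blockEquiv, G1'_submatrix_blockEquiv,
    det_fromBlocks_smul_one₁₁ (by simpa using ha₀), schurComplement_of_first_block,
    det_fromBlocks_smul_one₁₁ hs, schurComplement_of_second_block,
    det_smul_one_add_smul_cyclicShift_add_transpose, Fintype.card_fin]
  field_simp
  ring

theorem stmt19 (a b c : ℤ) (ha : 1 ≤ a) (hb : 1 ≤ b) (hc : 1 ≤ c) :
    (a : ℚ)^3 * (G1' a b c).det =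
      ((3*(a:ℚ)*b + 3*(b:ℚ)*c + 3*(c:ℚ)*a + 3*(a:ℚ) + 3*(b:ℚ) + 3*(c:ℚ) + 2))^2 :=
  stmt19_general a b c ha hb
end
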